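/- arXiv:math/0302231 — 2 statements merged into one kernel-verified Lean document; each statement's English description precedes it below -/
import Mathlib

section
/- Let (Ω(S),T) be a substitution dynamical system satisfying condition (BG) for a letter e∈A. Then (Ω(S),T) is minimal; in fact, for every n∈ℕ the word S^n(e) occurs with bounded gaps in W(S). -/
open List Filter Topology MeasureTheory

namespace SubstLR

variable {A : Type*}

/-- Apply the substitution `S` to a finite word. -/
def subst (S : A → List A) (w : List A) : List A := w.flatMap S

/-- `iter S n w` is `S^n(w)`. -/
def iter (S : A → List A) (n : ℕ) (w : List A) : List A := (subst S)^[n] w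

/-- The set `W(S)` of finite words associated to `S`. -/
def WS (S : A → List A) : Set (List A) := {w | ∃ (a : A) (n : ℕ), w <:+: iter S n [a]}

/-- `w` is a finite factor of the two-sided infinite word `ω`. -/
def IsFactor (w : List A) (ω : ℤ → A) : Prop :=
  ∃ k : ℤ, w = (List.range w.length).map fun i => ω (k + i)

/-- The subshift `Ω(S)` associated to `S`. -/
def OmegaS (S : A → List A) : Set (ℤ → A) := {ω | ∀ w, IsFactor w ω → w ∈ WS S}

/-- The set `W(Ω(S))` of finite factors of elements of `Ω(S)`. -/
def WOmega (S : A → List A) : Set (List A) := {w | ∃ ω ∈ OmegaS S, IsFactor w ω}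

/-- Condition (ℓ): `|S^n(e)| → ∞`. -/
def CondL (S : A → List A) (e : A) : Prop :=
  Tendsto (fun n => (iter S n [e]).length) atTop atTop

/-- Condition (o): every letter occurs in some `S^n(e)`. -/
def CondO (S : A → List A) (e : A) : Prop := ∀ a : A, ∃ n : ℕ, a ∈ iter S n [e]

/-- Condition (c): `W(S) = W(Ω(S))`. -/
def CondC (S : A → List A) : Prop := WS S = WOmega S

/-- `(Ω(S),T)` is a substitution dynamical system. -/
def IsSubstSystem (S : A → List A) : Prop := (∃ e, CondL S e ∧ CondO S e) ∧ CondC S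

/-- `v` occurs with bounded gaps in the set of words `W`. -/
def BddGaps (v : List A) (W : Set (List A)) : Prop :=
  ∃ L : ℕ, 0 < L ∧ ∀ w ∈ W, L ≤ w.length → v <:+: w

/-- Condition (BG) for the letter `e`. -/
def BG (S : A → List A) (e : A) : Prop := CondL S e ∧ CondO S e ∧ BddGaps [e] (WS S)

/-- The shift by `k`; `shift 1` is the map `T`. -/
def shift (k : ℤ) (ω : ℤ → A) : ℤ → A := fun n => ω (n + k)

/-- `(Ω(S),T)` is minimal: every orbit is dense in `Ω(S)`. -/
def Minimal [TopologicalSpace A] (S : A → List A) : Prop :=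
  ∀ ω ∈ OmegaS S, OmegaS S ⊆ closure {ω' | ∃ k : ℤ, ω' = shift k ω}

/-- `(Ω(S),T)` is linearly repetitive. -/
def LinRep (S : A → List A) : Prop :=
  ∃ C : ℝ, 0 < C ∧ ∀ v ∈ WS S, ∀ w ∈ WS S, C * v.length ≤ (w.length : ℝ) → v <:+: w

/-- `(Ω(S),T)` is aperiodic. -/
def Aperiodic (S : A → List A) : Prop :=
  ∀ ω ∈ OmegaS S, ∀ k : ℤ, k ≠ 0 → shift k ω ≠ ω

/-- The set `B` of letters `a` with `limsup |S^n(a)| < ∞`. -/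
def Bset (S : A → List A) : Set A := {a | ∃ M : ℕ, ∀ n, (iter S n [a]).length ≤ M}

/-- The set `C = A ∖ B`. -/
def Cset (S : A → List A) : Set A := (Bset S)ᶜ

open Classical in
/-- `tilde S w` is the word obtained from `w` by deleting all letters of `B`. -/
noncomputable def tilde (S : A → List A) (w : List A) : List A :=
  w.filter fun x => decide (x ∈ Cset S)

/-- The induced substitution `S̃`. -/
noncomputable def tildeS (S : A → List A) : A → List A := fun x => tilde S (S x)


section Aux
variable (S : A → List A)

lemma subst_append (v w : List A) : subst S (v ++ w) = subst S v ++ subst S w :=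
  List.flatMap_append ..

lemma iter_append (n : ℕ) (v w : List A) : iter S n (v ++ w) = iter S n v ++ iter S n w := by
  induction n generalizing v w with
  | zero => rfl
  | succ n ih =>
    simp only [iter, Function.iterate_succ_apply] at *
    rw [show subst S (v ++ w) = subst S v ++ subst S w from List.flatMap_append .., ih]

lemma iter_nil (n : ℕ) : iter S n ([] : List A) = [] := by
  induction n with
  | zero => rfl
  | succ n ih =>
    simp only [iter, Function.iterate_succ_apply] at *
    rw [show subst S [] = [] from rfl, ih]

lemma iter_flatMap (n : ℕ) (u : List A) : iter S n u = u.flatMap (fun a => iter S n [a]) := by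
  induction u with
  | nil => simp [iter_nil]
  | cons a u ih =>
    rw [show (a :: u) = [a] ++ u from rfl, iter_append, ih]; simp

lemma iter_add (m n : ℕ) (w : List A) : iter S (m + n) w = iter S m (iter S n w) := by
  simp [iter, Function.iterate_add_apply]

lemma iter_infix_mono {u v : List A} (h : u <:+: v) (n : ℕ) : iter S n u <:+: iter S n v := by
  obtain ⟨s, t, rfl⟩ := h
  exact ⟨iter S n s, iter S n t, by rw [← iter_append, ← iter_append]⟩

lemma flatMap_infix_mono (f : A → List A) {u v : List A} (h : u <:+: v) :
    u.flatMap f <:+: v.flatMap f := by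
  obtain ⟨s, t, rfl⟩ := h
  exact ⟨s.flatMap f, t.flatMap f, by simp [List.flatMap_append]⟩

lemma mem_ws_iter (a : A) (n : ℕ) : iter S n [a] ∈ WS S := ⟨a, n, List.infix_rfl⟩

lemma singleton_infix_of_mem' {l : List A} {a : A} (h : a ∈ l) : [a] <:+: l := by
  obtain ⟨s, t, rfl⟩ := List.append_of_mem h
  exact ⟨s, t, by simp⟩

lemma ws_factor_iterE {e : A} (ho : CondO S e) {w : List A} (hw : w ∈ WS S) :
    ∃ N, w <:+: iter S N [e] := by
  obtain ⟨a, m, hm⟩ := hw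
  obtain ⟨na, hna⟩ := ho a
  refine ⟨m + na, hm.trans ?_⟩
  have h1 := iter_infix_mono S (singleton_infix_of_mem' hna) m
  rwa [← iter_add] at h1

lemma exists_selfocc {e : A} (hL : CondL S e) (hBGe : BddGaps [e] (WS S)) :
    ∃ p, 1 ≤ p ∧ [e] <:+: iter S p [e] := by
  obtain ⟨L, hLpos, hLspec⟩ := hBGe
  obtain ⟨p, hp⟩ := ((hL.eventually (eventually_ge_atTop L)).and (eventually_ge_atTop 1)).exists
  exact ⟨p, hp.2, hLspec _ (mem_ws_iter S e p) hp.1⟩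

lemma iterE_infix_bump {e : A} {p : ℕ} (hp : [e] <:+: iter S p [e]) (N k : ℕ) :
    iter S N [e] <:+: iter S (N + k * p) [e] := by
  induction k with
  | zero => simp
  | succ k ih =>
    have h1 := iter_infix_mono S hp (N + k * p)
    rw [← iter_add] at h1
    have h2 : N + (k + 1) * p = N + k * p + p := by ring
    rw [h2]
    exact ih.trans h1

lemma middle_infix {x w y P M Q : List A} (h : x ++ w ++ y = P ++ M ++ Q)
    (h1 : x.length ≤ P.length) (h2 : P.length + M.length ≤ x.length + w.length) :
    M <:+: w := by
  set d := P.length - x.length with hd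
  have e1 : w.drop d ++ y = M ++ Q := by
    have h' : x ++ (w ++ y) = P ++ (M ++ Q) := by simpa [List.append_assoc] using h
    have h'' := congrArg (List.drop P.length) h'
    rw [List.drop_left] at h''
    rw [List.drop_append, List.drop_eq_nil_of_le h1,
        List.nil_append, ← hd, List.drop_append,
        Nat.sub_eq_zero_of_le (by omega), List.drop_zero] at h''
    exact h''
  have e2 : (w.drop d).take M.length = M := by
    have h3 := congrArg (List.take M.length) e1
    rw [List.take_left] at h3
    rw [List.take_append, List.length_drop,
        Nat.sub_eq_zero_of_le (by omega), List.take_zero, List.append_nil] at h3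
    exact h3
  rw [← e2]
  exact (List.take_prefix _ _).isInfix.trans (List.drop_suffix _ _).isInfix

lemma block_capture (f : A → List A) (K L : ℕ) (hK : 1 ≤ K) (hL : 1 ≤ L)
    (hf : ∀ a, (f a).length ≤ K) (u x w y : List A)
    (h : x ++ w ++ y = u.flatMap f) (hw : (L + 2) * K ≤ w.length) :
    ∃ v, v <:+: u ∧ L ≤ v.length ∧ v.flatMap f <:+: w := by
  classical
  set g : ℕ → ℕ := fun i => ((u.take i).flatMap f).length with hg
  have flen : ∀ l : List A, (l.flatMap f).length ≤ l.length * K := by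
    intro l
    induction l with
    | nil => simp
    | cons a l ih =>
      have := hf a
      simp only [List.flatMap_cons, List.length_append, List.length_cons, Nat.succ_mul]
      omega
  have gstep : ∀ i, g i ≤ g (i + 1) ∧ g (i + 1) ≤ g i + K := by
    intro i
    have hopt : ((u[i]?.toList).flatMap f).length ≤ K := by
      cases h' : u[i]? with
      | none => simp
      | some a => simpa using hf a
    simp only [hg, List.take_succ, List.flatMap_append, List.length_append]
    constructor
    · omega
    · omega
  have gmono : Monotone g := monotone_nat_of_le_succ (fun i => (gstep i).1)
  have g0 : g 0 = 0 := by simp [hg]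
  have gtot : g u.length = x.length + w.length + y.length := by
    have h4 := congrArg List.length h
    simp only [List.length_append] at h4
    simp only [hg]
    rw [List.take_length, ← h4]
  have hwpos : 3 * K ≤ w.length := le_trans (by nlinarith) hw
  -- least i with x.length ≤ g i
  have hex1 : ∃ i, x.length ≤ g i := ⟨u.length, by omega⟩
  set i := Nat.find hex1 with hidef
  have hi : x.length ≤ g i := Nat.find_spec hex1
  have hi' : g i ≤ x.length + K := by
    rcases Nat.eq_zero_or_pos i with h0 | h0
    · rw [h0, g0]; omega
    · have := Nat.find_min hex1 (show i - 1 < i by omega)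
      have hm : g (i - 1) < x.length := by omega
      have := (gstep (i - 1)).2
      have heq : i - 1 + 1 = i := by omega
      rw [heq] at this
      omega
  -- least j with x.length + w.length ≤ g j
  have hex2 : ∃ j, x.length + w.length ≤ g j := ⟨u.length, by omega⟩
  set j := Nat.find hex2 with hjdef
  have hj : x.length + w.length ≤ g j := Nat.find_spec hex2
  have hjpos : 0 < j := by
    rcases Nat.eq_zero_or_pos j with h0 | h0
    · exfalso; rw [h0, g0] at hj; omega
    · exact h0
  set j₁ := j - 1 with hj1def
  have hj1lt : g j₁ < x.length + w.length := by
    have := Nat.find_min hex2 (show j₁ < j by omega)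
    omega
  have hj1ge : x.length + w.length ≤ g j₁ + K := by
    have := (gstep j₁).2
    have heq : j₁ + 1 = j := by omega
    rw [heq] at this
    omega
  have hij : i ≤ j₁ := by
    by_contra hc
    have := gmono (show j₁ ≤ i by omega)
    nlinarith
  set v := (u.take j₁).drop i with hvdef
  have htake : u.take j₁ = u.take i ++ v := by
    conv_lhs => rw [← List.take_append_drop i (u.take j₁)]
    rw [List.take_take, min_eq_left hij]
  have hPlen : ((u.take i).flatMap f).length = g i := rfl
  have hPMlen : ((u.take i).flatMap f).length + (v.flatMap f).length = g j₁ := by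
    have h5 : g j₁ = ((u.take j₁).flatMap f).length := rfl
    rw [h5, htake, List.flatMap_append, List.length_append]
  have hdecomp : x ++ w ++ y = (u.take i).flatMap f ++ v.flatMap f ++ (u.drop j₁).flatMap f := by
    rw [h]
    conv_lhs => rw [← List.take_append_drop j₁ u]
    rw [htake, List.flatMap_append, List.flatMap_append]
  have hMw : v.flatMap f <:+: w := middle_infix hdecomp (by omega) (by omega)
  have hw' : L * K + 2 * K ≤ w.length := by
    have h6 : (L + 2) * K = L * K + 2 * K := by ring
    omega
  have hM : L * K ≤ (v.flatMap f).length := by omega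
  have hvlen : L ≤ v.length := Nat.le_of_mul_le_mul_right (le_trans hM (flen v)) (by omega)
  exact ⟨v, (List.drop_suffix i (u.take j₁)).isInfix.trans (List.take_prefix j₁ u).isInfix,
    hvlen, hMw⟩

end Aux

lemma main_bg {A : Type*} [Fintype A] (S : A → List A) {e : A} (hL : CondL S e)
    (ho : CondO S e) (hBGe : BddGaps [e] (WS S)) (n : ℕ) :
    BddGaps (iter S n [e]) (WS S) := by
  classical
  obtain ⟨L, hLpos, hLspec⟩ := hBGe
  obtain ⟨p, hp1, hpocc⟩ := exists_selfocc S hL ⟨L, hLpos, hLspec⟩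
  set K : ℕ := 1 + Finset.univ.sup (fun a : A => (iter S n [a]).length) with hKdef
  have hfK : ∀ a : A, (iter S n [a]).length ≤ K := by
    intro a
    have h8 : (iter S n [a]).length ≤ Finset.univ.sup (fun a : A => (iter S n [a]).length) :=
      Finset.le_sup (f := fun a : A => (iter S n [a]).length) (Finset.mem_univ a)
    omega
  refine ⟨(L + 2) * K, Nat.mul_pos (by omega) (by omega), ?_⟩
  intro w hw hwlen
  obtain ⟨N0, hN0⟩ := ws_factor_iterE S ho hw
  have hN : w <:+: iter S (N0 + n * p) [e] := hN0.trans (iterE_infix_bump S hpocc N0 n)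
  obtain ⟨d, hd⟩ : ∃ d, N0 + n * p = n + d := by
    have hnp : n ≤ n * p := Nat.le_mul_of_pos_right n (by omega)
    exact ⟨N0 + n * p - n, by omega⟩
  rw [hd, iter_add, iter_flatMap] at hN
  obtain ⟨x, y, hxy⟩ := hN
  obtain ⟨v, hvinf, hvlen, hvw⟩ := block_capture (fun a => iter S n [a]) K L (by omega) hLpos
    hfK (iter S d [e]) x w y hxy hwlen
  have he : [e] <:+: v := hLspec v ⟨e, d, hvinf⟩ hvlen
  have h7 := flatMap_infix_mono (fun a => iter S n [a]) he
  simp only [List.flatMap_cons, List.flatMap_nil, List.append_nil] at h7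
  exact h7.trans hvw

lemma flatMap_single {A B : Type*} (l : List A) (h : A → B) :
    (l.flatMap fun a => [h a]) = l.map h := by
  induction l with
  | nil => rfl
  | cons a l ih => simp [ih]


/-- under (BG), the system is minimal; in fact every `S^n(e)` occurs with
bounded gaps in `W(S)`. -/
theorem statement2 {A : Type*} [Fintype A] [TopologicalSpace A] [DiscreteTopology A]
    (S : A → List A) (hS : IsSubstSystem S) (e : A) (hBG : BG S e) :
    Minimal S ∧ ∀ n : ℕ, BddGaps (iter S n [e]) (WS S) := by
  obtain ⟨hL, ho, hBGe⟩ := hBG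
  have hbg : ∀ n : ℕ, BddGaps (iter S n [e]) (WS S) := main_bg S hL ho hBGe
  refine ⟨?_, hbg⟩
  intro ω hω ω' hω'
  rw [mem_closure_iff]
  intro o hoo hmem
  obtain ⟨I, U, hU, hsub⟩ := isOpen_pi_iff.mp hoo ω' hmem
  set m : ℕ := I.sup (fun i => i.natAbs) with hmdef
  set w₀ : List A := (List.range (2 * m + 1)).map (fun t : ℕ => ω' (-(m : ℤ) + t)) with hw₀
  have hw₀len : w₀.length = 2 * m + 1 := by simp [hw₀]
  have hw₀WS : w₀ ∈ WS S := hω' w₀ ⟨-(m : ℤ), by rw [hw₀len]; simp only [hw₀, List.bind_eq_flatMap, List.pure_def, List.map_flatMap, List.map_cons, List.map_nil, flatMap_single, List.map_map, Function.comp_def]⟩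
  obtain ⟨N, hN⟩ := ws_factor_iterE S ho hw₀WS
  obtain ⟨Ln, hLnpos, hLnspec⟩ := hbg N
  set w₁ : List A := (List.range Ln).map (fun t : ℕ => ω ((0 : ℤ) + t)) with hw₁
  have hw₁len : w₁.length = Ln := by simp [hw₁]
  have hw₁WS : w₁ ∈ WS S := hω w₁ ⟨0, by rw [hw₁len]; simp only [hw₁, List.bind_eq_flatMap, List.pure_def, List.map_flatMap, List.map_cons, List.map_nil, flatMap_single, List.map_map, Function.comp_def]⟩
  have hocc : w₀ <:+: w₁ := hN.trans (hLnspec w₁ hw₁WS (le_of_eq hw₁len.symm))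
  obtain ⟨x, y, hxy⟩ := hocc
  have hxy' : x ++ (w₀ ++ y) = w₁ := by rw [← List.append_assoc]; exact hxy
  refine ⟨shift ((x.length : ℤ) + m) ω, hsub ?_, ⟨(x.length : ℤ) + m, rfl⟩⟩
  rw [Set.mem_pi]
  intro i hiI
  have hiI' : i ∈ I := hiI
  have hile : i.natAbs ≤ m := Finset.le_sup hiI'
  have key : shift ((x.length : ℤ) + m) ω i = ω' i := by
    set t : ℕ := (i + m).toNat with htdef
    have hti : (t : ℤ) = i + m := Int.toNat_of_nonneg (by omega)
    have hb1 : t < w₀.length := by rw [hw₀len]; omega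
    have hb2 : x.length + t < w₁.length := by
      have h9 := congrArg List.length hxy
      simp only [List.length_append] at h9
      omega
    have hb3 : x.length + t < (x ++ (w₀ ++ y)).length := by rw [hxy']; exact hb2
    have e0 : w₀[t]'hb1 = ω' (-(m : ℤ) + t) := by simp [hw₀]
    have e1 : w₁[x.length + t]'hb2 = ω ((0 : ℤ) + (x.length + t : ℕ)) := by simp [hw₁]
    have e2 : (x ++ (w₀ ++ y))[x.length + t]'hb3 = w₀[t]'hb1 := by
      rw [List.getElem_append_right (Nat.le_add_right _ _)]
      simp only [Nat.add_sub_cancel_left]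
      exact List.getElem_append_left hb1
    have e3 : w₁[x.length + t]'hb2 = w₀[t]'hb1 := by
      rw [← e2]
      exact List.getElem_of_eq hxy'.symm hb2
    have e4 : ω ((0 : ℤ) + (x.length + t : ℕ)) = ω' (-(m : ℤ) + t) := by
      rw [← e0, ← e1, e3]
    show ω (i + ((x.length : ℤ) + m)) = ω' i
    have harg1 : (0 : ℤ) + ((x.length + t : ℕ) : ℤ) = i + ((x.length : ℤ) + m) := by
      push_cast [hti]; ring
    have harg2 : -(m : ℤ) + t = i := by rw [hti]; ring
    rw [harg1, harg2] at e4
    exact e4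
  rw [key]
  exact (hU i hiI').2

end SubstLR
end

section
/- Let (Ω(S),T) be a substitution dynamical system satisfying condition (BG) for the letter e∈A. Then for any a∈A the following are equivalent: (i) |S^n(a)|→∞ as n→∞; (ii) e occurs as a factor of S^k(a) for some k∈ℕ. -/
open List Filter Topology MeasureTheory

namespace SubstLR

variable {A : Type*}

/-! Both directions are monotonicity arguments. If `|S^n(a)| → ∞`, then some `S^n(a)` is a word of
`W(S)` longer than the gap bound of `e`, so it contains `e`. Conversely, if `e` occurs in `S^k(a)`,
then `S^m(e)` is a subword of `S^(m+k)(a)`, whose length is therefore bounded below by `|S^m(e)| → ∞`. -/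

theorem iter_iter (S : A → List A) (m k : ℕ) (w : List A) :
    iter S m (iter S k w) = iter S (m + k) w := by
  simp only [iter, Function.iterate_add_apply]

theorem iter_sublist (S : A → List A) {w₁ w₂ : List A} (h : w₁ <+ w₂) (n : ℕ) :
    iter S n w₁ <+ iter S n w₂ := by
  induction n with
  | zero => exact h
  | succ n ih =>
    simp only [iter, Function.iterate_succ_apply']
    exact ih.flatMap S

theorem iter_mem_WS (S : A → List A) (n : ℕ) (a : A) : iter S n [a] ∈ WS S :=
  ⟨a, n, List.infix_refl _⟩

theorem exists_mem_iter_of_tendsto {S : A → List A} {e a : A} (hgaps : BddGaps [e] (WS S))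
    (h : Tendsto (fun n => (iter S n [a]).length) atTop atTop) : ∃ k, e ∈ iter S k [a] := by
  obtain ⟨L, -, hL⟩ := hgaps
  obtain ⟨k, hk⟩ := (h.eventually_ge_atTop L).exists
  exact ⟨k, (singleton_infix_iff e _).mp (hL _ (iter_mem_WS S k a) hk)⟩

theorem tendsto_length_iter_of_mem {S : A → List A} {e a : A} (he : CondL S e) {k : ℕ}
    (hk : e ∈ iter S k [a]) : Tendsto (fun n => (iter S n [a]).length) atTop atTop := by
  have hsub (m : ℕ) : iter S m [e] <+ iter S (m + k) [a] :=
    iter_iter S m k [a] ▸ iter_sublist S (singleton_sublist.mpr hk) m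
  refine tendsto_atTop_mono' _ ?_ (he.comp (tendsto_sub_atTop_nat k))
  filter_upwards [eventually_ge_atTop k] with n hn
  simpa only [Function.comp_apply, Nat.sub_add_cancel hn] using (hsub (n - k)).length_le

theorem statement3_general {A : Type*}
    (S : A → List A) (e : A) (hBG : BG S e) (a : A) :
    Tendsto (fun n => (iter S n [a]).length) atTop atTop ↔ ∃ k : ℕ, e ∈ iter S k [a] :=
  ⟨exists_mem_iter_of_tendsto hBG.2.2, fun ⟨_, hk⟩ => tendsto_length_iter_of_mem hBG.1 hk⟩

/-- under (BG) for `e`, for any letter `a`: `|S^n(a)| → ∞` iff `e` occurs in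
some `S^k(a)`. -/
theorem statement3 {A : Type*} [Fintype A]
    (S : A → List A) (hS : IsSubstSystem S) (e : A) (hBG : BG S e) (a : A) :
    Tendsto (fun n => (iter S n [a]).length) atTop atTop ↔ ∃ k : ℕ, e ∈ iter S k [a] :=
  statement3_general S e hBG a

end SubstLR
end
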